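/- arXiv:math/0611744 — 2 statements merged into one kernel-verified Lean document; each statement's English description precedes it below -/
import Mathlib

section
/- cov(ℳ) ≤ 𝔞(𝒩𝒟_T): if ℱ ⊆ 𝒩𝒟_T is a pairwise almost disjoint family of cardinality less than cov(ℳ), then there exists f ∈ 2^ω such that the branch B(f) is in 𝒩𝒟_T and is almost disjoint from every member of ℱ; hence ℱ is not mad in 𝒩𝒟_T. -/
open Cardinal Set

/-- The full binary tree `T = 2^{<ω}`, modeled as finite lists of booleans;
`s ≤ t` iff `t` is a prefix of `s` (i.e. `s` extends `t`). -/
abbrev BinTree := List Bool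

/-- The restriction `f↾n ∈ 2^{<ω}` of `f ∈ 2^ω`. -/
def restr (f : ℕ → Bool) (n : ℕ) : BinTree := List.ofFn (fun i : Fin n => f i)

/-- The branch `B(f) = { f↾n : n ∈ ω }` induced by `f ∈ 2^ω`. -/
def branch (f : ℕ → Bool) : Set BinTree := Set.range (restr f)

/-- `⌊X⌋ = { f ∈ 2^ω : |B(f) ∩ X| = ℵ₀ }`. -/
def floorSet (X : Set BinTree) : Set (ℕ → Bool) := {f | (branch f ∩ X).Infinite}

/-- `X` is covered by finitely many branches of `T`. -/
def CoveredByFinitelyManyBranches (X : Set BinTree) : Prop :=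
  ∃ s : Finset (ℕ → Bool), X ⊆ ⋃ f ∈ s, branch f

/-- `X` contains no infinite antichain (w.r.t. the prefix/extension order on `T`). -/
def NoInfiniteAntichain (X : Set BinTree) : Prop :=
  ¬ ∃ A ⊆ X, A.Infinite ∧ IsAntichain (· <+: ·) A

/-- The class `ℬ_T` of infinite subsets of `T` containing no infinite antichain. -/
def Bclass : Set (Set BinTree) := { X | X.Infinite ∧ NoInfiniteAntichain X }

/-- The class `𝒜_T` of infinite antichains of `T`. -/
def Aclass : Set (Set BinTree) := { X | X.Infinite ∧ IsAntichain (· <+: ·) X }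

/-- The class `𝒩𝒟_T` of infinite `X ⊆ T` with `⌊X⌋` nowhere dense in Cantor space. -/
def NDclass : Set (Set BinTree) := { X | X.Infinite ∧ IsNowhereDense (floorSet X) }

/-- `σ` is the standard fair-coin product measure on `2^ω`, characterized as a
probability measure giving each basic clopen set `{ f : f↾ℓ(t) = t }` measure `2^{-ℓ(t)}`. -/
def IsCantorMeasure (σ : MeasureTheory.Measure (ℕ → Bool)) : Prop :=
  MeasureTheory.IsProbabilityMeasure σ ∧
    ∀ t : BinTree, σ { f | restr f t.length = t } = (2 : ENNReal)⁻¹ ^ t.length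

/-- The class `𝒩_T` (w.r.t. a measure `σ` on `2^ω`) of infinite `X ⊆ T` with `σ(⌊X⌋) = 0`. -/
def Nclass (σ : MeasureTheory.Measure (ℕ → Bool)) : Set (Set BinTree) :=
  { X | X.Infinite ∧ σ (floorSet X) = 0 }

/-- Pairwise almost disjoint family of infinite sets. -/
def ADFamily {α : Type*} (F : Set (Set α)) : Prop :=
  (∀ X ∈ F, X.Infinite) ∧ F.Pairwise fun X Y => (X ∩ Y).Finite

/-- `F` is a maximal almost disjoint family within `𝒳`. -/
def MadIn {α : Type*} (𝒳 F : Set (Set α)) : Prop :=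
  F ⊆ 𝒳 ∧ ADFamily F ∧ ∀ Y ∈ 𝒳, ∃ X ∈ F, (Y ∩ X).Infinite

/-- The collection `[α]^{ℵ₀}` of all infinite subsets of `α`. -/
def infSets (α : Type*) : Set (Set α) := { X | X.Infinite }

/-- `𝔞(𝒳)`: the least cardinality of an infinite mad family within `𝒳`. -/
noncomputable def aInv {α : Type*} (𝒳 : Set (Set α)) : Cardinal :=
  sInf { c : Cardinal | ∃ F, F.Infinite ∧ MadIn 𝒳 F ∧ #F = c }

/-- `cov(ℳ)`: the least number of meager subsets of `2^ω` covering `2^ω`. -/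
noncomputable def covMeager : Cardinal :=
  sInf { c : Cardinal | ∃ S : Set (Set (ℕ → Bool)),
    (∀ A ∈ S, IsMeagre A) ∧ ⋃₀ S = Set.univ ∧ #S = c }

/-- `cov(𝒩)`: the least number of `σ`-null subsets of `2^ω` covering `2^ω`. -/
noncomputable def covNull (σ : MeasureTheory.Measure (ℕ → Bool)) : Cardinal :=
  sInf { c : Cardinal | ∃ S : Set (Set (ℕ → Bool)),
    (∀ A ∈ S, σ A = 0) ∧ ⋃₀ S = Set.univ ∧ #S = c }

/-- `F^⊥`: the family of infinite sets almost disjoint from every member of `F`. -/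
def perp {α : Type*} (F : Set (Set α)) : Set (Set α) :=
  { Y | Y.Infinite ∧ ∀ X ∈ F, (Y ∩ X).Finite }

/-- Membership in the ideal `ℐ(G)` generated by `G` together with the finite sets:
`S ⊆* ∪G'` for some finite `G' ⊆ G`. -/
def InIdeal {α : Type*} (G : Set (Set α)) (S : Set α) : Prop :=
  ∃ G' : Finset (Set α), ↑G' ⊆ G ∧ (S \ ⋃₀ ↑G').Finite

/-- `𝔞⁺(F) = 𝔞(F^⊥)`. -/
noncomputable def aPlus {α : Type*} (F : Set (Set α)) : Cardinal := aInv (perp F)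

/-- `B` almost decides `F`: `B^⊥` is exactly the family of infinite members of
the ideal generated by `F \ B` and the finite sets. -/
def AlmostDecides {α : Type*} (B F : Set (Set α)) : Prop :=
  perp B = { Y | Y.Infinite ∧ InIdeal (F \ B) Y }

/-- A subset `C` of a poset is centered: every finite subset of `C` has a common
lower bound. -/
def Centered {P : Type*} [Preorder P] (C : Set P) : Prop :=
  ∀ s : Finset P, ↑s ⊆ C → ∃ p, ∀ q ∈ s, p ≤ q

/-- A poset is σ-centered: it is a countable union of centered subsets. -/
def SigmaCentered (P : Type*) [Preorder P] : Prop :=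
  ∃ C : ℕ → Set P, (∀ n, Centered (C n)) ∧ ⋃ n, C n = Set.univ

/-- `D` is dense (below every condition) in the poset `P`. -/
def DenseBelow {P : Type*} [Preorder P] (D : Set P) : Prop :=
  ∀ p : P, ∃ q ∈ D, q ≤ p

/-- `G` is a filter on the poset `P`. -/
def IsFilterOn {P : Type*} [Preorder P] (G : Set P) : Prop :=
  (∀ p ∈ G, ∀ q, p ≤ q → q ∈ G) ∧ ∀ p ∈ G, ∀ q ∈ G, ∃ r ∈ G, r ≤ p ∧ r ≤ q

/-- Martin's axiom for σ-centered posets: for every nonempty σ-centered poset and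
fewer than continuum many dense sets there is a filter meeting them all. -/
def MASigmaCentered : Prop :=
  ∀ (P : Type) (_ : Preorder P) (_ : Nonempty P), SigmaCentered P →
    ∀ 𝒟 : Set (Set P), #𝒟 < Cardinal.continuum → (∀ D ∈ 𝒟, DenseBelow D) →
      ∃ G : Set P, IsFilterOn G ∧ ∀ D ∈ 𝒟, (G ∩ D).Nonempty

/-! The branch `B(f)` is a witness: `⌊B(f)⌋ = {f}`, which is nowhere dense because Cantor space
has no isolated points, so `B(f) ∈ 𝒩𝒟_T`; and `B(f)` is almost disjoint from `X` as soon as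
`f ∉ ⌊X⌋`. For `X ∈ 𝒩𝒟_T` the set `⌊X⌋` is meagre, so fewer than `cov(ℳ)` of them miss some `f`.
Conversely the branches form an infinite ad family in `𝒩𝒟_T`, which Zorn's lemma extends to a
mad one, so `𝔞(𝒩𝒟_T)` is the infimum of a nonempty set. -/

open Filter Topology

instance Pi.perfectSpace_of_infinite {ι : Type*} [Infinite ι] {X : ι → Type*}
    [∀ i, TopologicalSpace (X i)] [∀ i, Nontrivial (X i)] : PerfectSpace (∀ i, X i) := by
  refine perfectSpace_iff_forall_not_isolated.2 fun x => ?_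
  classical
  choose y hy using fun i => exists_ne (x i)
  -- `Function.update x i (y i)` differs from `x` only at `i`, so it tends to `x` along cofinite.
  have hlim : Tendsto (fun i => Function.update x i (y i)) cofinite (𝓝[≠] x) := by
    refine tendsto_nhdsWithin_iff.2 ⟨tendsto_pi_nhds.2 fun j => ?_, ?_⟩
    · refine tendsto_const_nhds.congr' ?_
      filter_upwards [eventually_cofinite_ne j] with i hij
      rw [Function.update_of_ne hij.symm]
    · exact .of_forall fun i h => hy i (by simpa using congrFun h i)
  exact hlim.neBot

lemma isNowhereDense_singleton {X : Type*} [TopologicalSpace X] [T1Space X] [PerfectSpace X]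
    (x : X) : IsNowhereDense {x} := by
  rw [IsNowhereDense, closure_singleton, interior_singleton]

@[simp]
lemma length_restr (f : ℕ → Bool) (n : ℕ) : (restr f n).length = n := by
  simp [restr]

lemma restr_eq_restr_iff {f g : ℕ → Bool} {m n : ℕ} :
    restr f m = restr g n ↔ m = n ∧ ∀ i < m, f i = g i := by
  constructor
  · intro h
    obtain rfl : m = n := by simpa using congrArg List.length h
    have h' := List.ofFn_inj.1 h
    exact ⟨rfl, fun i hi => congrFun h' ⟨i, hi⟩⟩
  · rintro ⟨rfl, h⟩
    exact congrArg List.ofFn (funext fun i => h i i.2)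

lemma restr_injective (f : ℕ → Bool) : Function.Injective (restr f) :=
  fun _ _ h => (restr_eq_restr_iff.1 h).1

lemma branch_infinite (f : ℕ → Bool) : (branch f).Infinite :=
  Set.infinite_range_of_injective (restr_injective f)

lemma finite_branch_inter_branch {f g : ℕ → Bool} (hfg : f ≠ g) :
    (branch f ∩ branch g).Finite := by
  obtain ⟨n, hn⟩ := Function.ne_iff.1 hfg
  refine ((Set.finite_Iic n).image (restr f)).subset ?_
  rintro _ ⟨⟨a, rfl⟩, b, hb⟩
  obtain ⟨rfl, hagree⟩ := restr_eq_restr_iff.1 hb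
  exact ⟨b, not_lt.1 fun hnb => hn (hagree n hnb).symm, rfl⟩

lemma infinite_branch_inter_branch_iff {f g : ℕ → Bool} :
    (branch f ∩ branch g).Infinite ↔ f = g := by
  refine ⟨fun h => by_contra fun hfg => h (finite_branch_inter_branch hfg), ?_⟩
  rintro rfl
  simpa using branch_infinite f

lemma branch_injective : Function.Injective branch := fun f g h =>
  infinite_branch_inter_branch_iff.1 (by simpa [h] using branch_infinite g)

lemma floorSet_branch (f : ℕ → Bool) : floorSet (branch f) = {f} := by
  ext g
  exact infinite_branch_inter_branch_iff

lemma branch_mem_NDclass (f : ℕ → Bool) : branch f ∈ NDclass :=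
  ⟨branch_infinite f, by rw [floorSet_branch]; exact isNowhereDense_singleton f⟩

lemma adFamily_range_branch : ADFamily (Set.range branch) := by
  refine ⟨Set.forall_mem_range.2 branch_infinite, ?_⟩
  rintro _ ⟨f, rfl⟩ _ ⟨g, rfl⟩ hne
  exact finite_branch_inter_branch fun hfg => hne (congrArg branch hfg)

section AlmostDisjoint

variable {α : Type*}

lemma ADFamily.insert {F : Set (Set α)} (hF : ADFamily F) {Y : Set α} (hY : Y.Infinite)
    (hYF : ∀ X ∈ F, (Y ∩ X).Finite) : ADFamily (insert Y F) := by
  refine ⟨Set.forall_mem_insert.2 ⟨hY, hF.1⟩, hF.2.insert fun X hX _ => ⟨hYF X hX, ?_⟩⟩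
  rw [Set.inter_comm]
  exact hYF X hX

lemma ADFamily.sUnion_of_isChain {C : Set (Set (Set α))} (hC : ∀ F ∈ C, ADFamily F)
    (hchain : IsChain (· ⊆ ·) C) : ADFamily (⋃₀ C) := by
  refine ⟨fun X ⟨F, hF, hX⟩ => (hC F hF).1 X hX, ?_⟩
  rintro X ⟨F₁, hF₁, hX⟩ Y ⟨F₂, hF₂, hY⟩ hXY
  rcases hchain.total hF₁ hF₂ with h | h
  · exact (hC F₂ hF₂).2 (h hX) hY hXY
  · exact (hC F₁ hF₁).2 hX (h hY) hXY

lemma exists_madIn_superset {𝒳 F₀ : Set (Set α)} (h𝒳 : ∀ Y ∈ 𝒳, Y.Infinite)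
    (hF₀𝒳 : F₀ ⊆ 𝒳) (hF₀ : ADFamily F₀) : ∃ M, F₀ ⊆ M ∧ MadIn 𝒳 M := by
  obtain ⟨M, hF₀M, ⟨hM𝒳, hM⟩, hmax⟩ := zorn_subset_nonempty {F | F ⊆ 𝒳 ∧ ADFamily F}
    (fun C hC hchain _ => ⟨⋃₀ C,
      ⟨Set.sUnion_subset fun F hF => (hC hF).1, .sUnion_of_isChain (fun F hF => (hC hF).2) hchain⟩,
      fun _ => Set.subset_sUnion_of_mem⟩) F₀ ⟨hF₀𝒳, hF₀⟩
  refine ⟨M, hF₀M, hM𝒳, hM, fun Y hY => by_contra fun hYM => ?_⟩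
  push Not at hYM
  have hYmem : Y ∈ M := hmax ⟨Set.insert_subset hY hM𝒳, hM.insert (h𝒳 Y hY) hYM⟩
    (Set.subset_insert Y M) (Set.mem_insert Y M)
  exact h𝒳 Y hY (by simpa using hYM Y hYmem)

lemma le_aInv {𝒳 : Set (Set α)} {κ : Cardinal} (hex : ∃ M, M.Infinite ∧ MadIn 𝒳 M)
    (h : ∀ F, MadIn 𝒳 F → κ ≤ #F) : κ ≤ aInv 𝒳 := by
  obtain ⟨M, hMinf, hM⟩ := hex
  refine le_csInf ⟨#M, M, hMinf, hM, rfl⟩ ?_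
  rintro _ ⟨F, -, hF, rfl⟩
  exact h F hF

end AlmostDisjoint

lemma exists_notMem_sUnion_of_mk_lt_covMeager {S : Set (Set (ℕ → Bool))}
    (hS : ∀ A ∈ S, IsMeagre A) (hlt : #S < covMeager) : ∃ f, f ∉ ⋃₀ S := by
  by_contra! hcov
  have hle : covMeager ≤ #S := csInf_le' ⟨S, hS, Set.eq_univ_of_forall hcov, rfl⟩
  exact hle.not_gt hlt

lemma exists_branch_perp_of_mk_lt_covMeager {F : Set (Set BinTree)} (hF : F ⊆ NDclass)
    (hlt : #F < covMeager) :
    ∃ f : ℕ → Bool, branch f ∈ NDclass ∧ ∀ X ∈ F, (branch f ∩ X).Finite := by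
  obtain ⟨f, hf⟩ := exists_notMem_sUnion_of_mk_lt_covMeager
    (Set.forall_mem_image.2 fun X hX => (hF hX).2.isMeagre)
    (Cardinal.mk_image_le.trans_lt hlt)
  exact ⟨f, branch_mem_NDclass f, fun X hX => Set.not_infinite.1 fun hfX =>
    hf ⟨floorSet X, Set.mem_image_of_mem _ hX, hfX⟩⟩

lemma exists_infinite_madIn_NDclass : ∃ M, M.Infinite ∧ MadIn NDclass M := by
  obtain ⟨M, hbranchM, hM⟩ := exists_madIn_superset (fun Y hY => hY.1)
    (Set.range_subset_iff.2 branch_mem_NDclass) adFamily_range_branch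
  exact ⟨M, (Set.infinite_range_of_injective branch_injective).mono hbranchM, hM⟩

/-- `cov(ℳ) ≤ 𝔞(𝒩𝒟_T)`: an ad family in `𝒩𝒟_T` of size `< cov(ℳ)` is not mad in
`𝒩𝒟_T`, as witnessed by a branch. -/
theorem stmt7 :
    covMeager ≤ aInv NDclass ∧
    ∀ F : Set (Set BinTree), F ⊆ NDclass → ADFamily F → #F < covMeager →
      ∃ f : ℕ → Bool, branch f ∈ NDclass ∧ ∀ X ∈ F, (branch f ∩ X).Finite := by
  refine ⟨le_aInv exists_infinite_madIn_NDclass fun F hF => ?_,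
    fun F hF _ => exists_branch_perp_of_mk_lt_covMeager hF⟩
  by_contra! hlt
  obtain ⟨f, hfND, hf⟩ := exists_branch_perp_of_mk_lt_covMeager hF.1 hlt
  obtain ⟨X, hXF, hfX⟩ := hF.2.2 (branch f) hfND
  exact hfX (hf X hXF)
end

section
/- If ℱ is a maximal almost disjoint family contained in the set 𝒜_T of infinite antichains of T = 2^{<ω} (maximal within 𝒜_T), then the family of infinite sets almost disjoint from every member of ℱ is exactly ℬ_T, the family of infinite subsets of T covered by finitely many branches. -/
open Cardinal Set

lemma restr_prefix (f : ℕ → Bool) {m n : ℕ} (h : m ≤ n) : restr f m <+: restr f n := by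
  rw [List.prefix_iff_eq_take]
  exact List.ext_get (by simp [restr, h]) fun i h1 h2 => by simp [restr]

lemma self_mem_branch (t : BinTree) : t ∈ branch (fun i => t.getD i false) := by
  refine ⟨t.length, ?_⟩
  apply List.ext_getElem <;> simp [restr, List.getD_eq_getElem]

lemma cov_mono {X Y : Set BinTree} (h : X ⊆ Y) (hY : CoveredByFinitelyManyBranches Y) : CoveredByFinitelyManyBranches X := by
  obtain ⟨s, hs⟩ := hY; exact ⟨s, h.trans hs⟩

lemma cov_union {X Y : Set BinTree} (hX : CoveredByFinitelyManyBranches X) (hY : CoveredByFinitelyManyBranches Y) : CoveredByFinitelyManyBranches (X ∪ Y) := by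
  classical
  obtain ⟨s, hs⟩ := hX; obtain ⟨t, ht⟩ := hY
  refine ⟨s ∪ t, fun x hx => ?_⟩
  rcases hx with hx | hx
  · obtain ⟨f, hf, hxf⟩ := Set.mem_iUnion₂.1 (hs hx)
    exact Set.mem_biUnion (Finset.mem_union_left _ hf) hxf
  · obtain ⟨f, hf, hxf⟩ := Set.mem_iUnion₂.1 (ht hx)
    exact Set.mem_biUnion (Finset.mem_union_right _ hf) hxf

lemma cov_of_finite {X : Set BinTree} (h : X.Finite) : CoveredByFinitelyManyBranches X := by
  classical
  refine ⟨h.toFinset.image (fun t i => t.getD i false), fun t ht => ?_⟩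
  refine Set.mem_biUnion (Finset.mem_image.2 ⟨t, h.mem_toFinset.2 ht, rfl⟩) (self_mem_branch t)

lemma cov_of_chain {X : Set BinTree} (h : ∀ a ∈ X, ∀ b ∈ X, a <+: b ∨ b <+: a) : CoveredByFinitelyManyBranches X := by
  classical
  set f : ℕ → Bool := fun n => if hn : ∃ t ∈ X, n < t.length then hn.choose.getD n false else false with hf
  refine ⟨{f}, fun t ht => ?_⟩
  refine Set.mem_biUnion (Finset.mem_singleton_self f) ⟨t.length, ?_⟩
  apply List.ext_getElem
  · simp [restr]
  · intro i h1 h2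
    simp only [restr, List.getElem_ofFn]
    have hex : ∃ u ∈ X, (i : ℕ) < u.length := ⟨t, ht, by simpa [restr] using h2⟩
    rw [hf]
    simp only [hex, dif_pos]
    obtain ⟨hu1, hu2⟩ := hex.choose_spec
    have h2' : (i : ℕ) < t.length := by simpa [restr] using h2
    rw [List.getD_eq_getElem _ _ hu2]
    rcases h hex.choose hu1 t ht with hp | hp
    · exact hp.getElem hu2
    · exact (hp.getElem h2').symm

lemma prefix_finite (v : BinTree) : {y : BinTree | y <+: v}.Finite := by
  apply Set.Finite.subset (List.finite_toSet v.inits)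
  intro y hy
  simpa [List.mem_inits] using hy

lemma keyB {X : Set BinTree} (h : ¬ CoveredByFinitelyManyBranches X) :
    ∃ x ∈ X, ∃ X' ⊆ X, ¬ CoveredByFinitelyManyBranches X' ∧ ∀ y ∈ X', ¬(x <+: y) ∧ ¬(y <+: x) := by
  -- X is not a chain
  have hnc : ¬ ∀ a ∈ X, ∀ b ∈ X, a <+: b ∨ b <+: a := fun hc => h (cov_of_chain hc)
  push_neg at hnc
  obtain ⟨u, hu, v, hv, huv1, huv2⟩ := hnc
  by_cases hXv : CoveredByFinitelyManyBranches {y ∈ X | v <+: y}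
  · -- remove the comparables of v
    refine ⟨v, hv, {y ∈ X | ¬(v <+: y) ∧ ¬(y <+: v)}, fun y hy => hy.1, ?_, fun y hy => hy.2⟩
    intro hc
    apply h
    have hsub : X ⊆ {y ∈ X | ¬(v <+: y) ∧ ¬(y <+: v)} ∪ ({y ∈ X | v <+: y} ∪ {y : BinTree | y <+: v}) := by
      intro y hy
      by_cases h1 : v <+: y
      · exact Or.inr (Or.inl ⟨hy, h1⟩)
      · by_cases h2 : y <+: v
        · exact Or.inr (Or.inr h2)
        · exact Or.inl ⟨hy, h1, h2⟩
    exact cov_mono hsub (cov_union hc (cov_union hXv (cov_of_finite (prefix_finite v))))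
  · -- use u together with the cone above v
    refine ⟨u, hu, {y ∈ X | v <+: y}, fun y hy => hy.1, hXv, fun y hy => ?_⟩
    constructor
    · intro h1
      rcases List.prefix_or_prefix_of_prefix h1 hy.2 with hp | hp
      · exact huv1 hp
      · exact huv2 hp
    · intro h1
      exact huv2 (hy.2.trans h1)

lemma exists_infinite_antichain {X : Set BinTree} (h : ¬ CoveredByFinitelyManyBranches X) :
    ∃ A ⊆ X, A.Infinite ∧ IsAntichain (· <+: ·) A := by
  classical
  -- recursively build the antichain
  have step : ∀ Z : {Z : Set BinTree // ¬ CoveredByFinitelyManyBranches Z},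
      ∃ p : BinTree × {Z : Set BinTree // ¬ CoveredByFinitelyManyBranches Z},
        p.1 ∈ Z.1 ∧ p.2.1 ⊆ Z.1 ∧ ∀ y ∈ p.2.1, ¬(p.1 <+: y) ∧ ¬(y <+: p.1) := by
    rintro ⟨Z, hZ⟩
    obtain ⟨x, hx, X', hX'1, hX'2, hX'3⟩ := keyB hZ
    exact ⟨(x, ⟨X', hX'2⟩), hx, hX'1, hX'3⟩
  choose f hf1 hf2 hf3 using step
  let g : ℕ → {Z : Set BinTree // ¬ CoveredByFinitelyManyBranches Z} := fun n => Nat.rec ⟨X, h⟩ (fun _ Z => (f Z).2) n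
  have hg : ∀ n, g (n + 1) = (f (g n)).2 := fun n => rfl
  let x : ℕ → BinTree := fun n => (f (g n)).1
  have hmono : ∀ m n, m ≤ n → (g n).1 ⊆ (g m).1 := by
    intro m n hmn
    induction n with
    | zero => simp_all
    | succ k ih =>
      rcases Nat.lt_or_ge m (k + 1) with hlt | hge
      · exact (hf2 (g k)).trans (ih (Nat.lt_succ_iff.1 hlt))
      · have : m = k + 1 := le_antisymm hmn hge
        subst this; exact fun _ hy => hy
  have hxg : ∀ n, x n ∈ (g n).1 := fun n => hf1 (g n)
  have hinc : ∀ m n, m < n → ¬(x m <+: x n) ∧ ¬(x n <+: x m) := by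
    intro m n hmn
    have : x n ∈ ((f (g m)).2 : {Z : Set BinTree // ¬ CoveredByFinitelyManyBranches Z}).1 := by
      have := hmono (m + 1) n hmn
      rw [hg m] at this
      exact this (hxg n)
    exact hf3 (g m) _ this
  have hxinj : Function.Injective x := by
    intro m n hmn
    by_contra hne
    rcases Nat.lt_or_ge m n with hlt | hge
    · exact (hinc m n hlt).1 (hmn ▸ List.prefix_refl _)
    · exact (hinc n m (lt_of_le_of_ne hge (Ne.symm hne))).1 (hmn ▸ List.prefix_refl _)
  refine ⟨Set.range x, ?_, Set.infinite_range_of_injective hxinj, ?_⟩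
  · rintro _ ⟨n, rfl⟩
    exact hmono 0 n (Nat.zero_le n) (hxg n)
  · rintro _ ⟨m, rfl⟩ _ ⟨n, rfl⟩ hne hp
    rcases Nat.lt_or_ge m n with hlt | hge
    · exact (hinc m n hlt).1 hp
    · have : n < m := lt_of_le_of_ne hge fun e => hne (by rw [e])
      exact (hinc n m this).2 hp

/-- If `F` is mad within the infinite antichains `𝒜_T`, then `F^⊥` is exactly `ℬ_T`,
the infinite subsets of `T` covered by finitely many branches. -/
theorem stmt12 (F : Set (Set BinTree)) (hF : MadIn Aclass F) :
    perp F = { X | X.Infinite ∧ CoveredByFinitelyManyBranches X } := by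
  ext Y
  constructor
  · rintro ⟨hYinf, hY⟩
    refine ⟨hYinf, ?_⟩
    by_contra hcov
    obtain ⟨A, hAY, hAinf, hAac⟩ := exists_infinite_antichain hcov
    obtain ⟨X, hXF, hXA⟩ := hF.2.2 A ⟨hAinf, hAac⟩
    exact (hXA.mono (Set.inter_subset_inter_left X hAY)) (hY X hXF)
  · rintro ⟨hYinf, s, hs⟩
    refine ⟨hYinf, fun X hXF => ?_⟩
    have hXac : IsAntichain (· <+: ·) X := (hF.1 hXF).2
    have hsub : Y ∩ X ⊆ ⋃ f ∈ s, (branch f ∩ X) := by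
      intro y hy
      obtain ⟨f, hf, hyf⟩ := Set.mem_iUnion₂.1 (hs hy.1)
      exact Set.mem_biUnion hf ⟨hyf, hy.2⟩
    refine Set.Finite.subset (Set.Finite.biUnion s.finite_toSet fun f _ => ?_) hsub
    apply Set.Subsingleton.finite
    rintro a ⟨⟨m, rfl⟩, haX⟩ b ⟨⟨n, rfl⟩, hbX⟩
    by_contra hne
    rcases le_total m n with hmn | hmn
    · exact hXac haX hbX hne (restr_prefix f hmn)
    · exact hXac hbX haX (Ne.symm hne) (restr_prefix f hmn)
end
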